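/- arXiv:0811.2766 — 2 statements merged into one kernel-verified Lean document; each statement's English description precedes it below -/
import Mathlib

section
/- Let F be an algebraically closed field, H a finite group, and N ⊴ H a normal subgroup with H/N cyclic of order d. Let P, Q ≤ H be subgroups with QN = H, and let g₁, g₂ ∈ H be elements whose double cosets satisfy Pg₁Q ≠ Pg₂Q. Let W be a finite-dimensional simple F[H]-module such that W ≅ Ind_P^H U for some F[P]-module U. For i = 1, 2 set K_i = [Q : (g_i^{-1} P g_i) ∩ Q]. Assume d · gcd(K₁, K₂) ≤ max(K₁, K₂). Then for every composition factor V of Res^H_N W, the restriction of V to Q ∩ N is not a simple F[Q ∩ N]-module. -/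
open Module

section Defs

variable {F : Type} [Field F] {G : Type} [Group G] {V : Type} [AddCommGroup V] [Module F V]

def IsSubrep (ρ : Representation F G V) (p : Submodule F V) : Prop :=
  ∀ (g : G) (v : V), v ∈ p → ρ g v ∈ p

def IsIrredRep (ρ : Representation F G V) : Prop :=
  (⊥ : Submodule F V) ≠ ⊤ ∧ ∀ p : Submodule F V, IsSubrep ρ p → p = ⊥ ∨ p = ⊤

/-- `σ` (a representation on `U`) is a composition factor of `ρ` (a representation on `V`):
there are invariant subspaces `p ≤ q` of `V` and an equivariant `F`-linear surjection
`q → U` whose kernel is exactly `p`, i.e. `q/p ≅ U` as `G`-modules. -/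
def IsCompFactor {U : Type} [AddCommGroup U] [Module F U]
    (σ : Representation F G U) (ρ : Representation F G V) : Prop :=
  ∃ (p q : Submodule F V) (_ : IsSubrep ρ p) (hq : IsSubrep ρ q) (_ : p ≤ q)
    (f : ↥q →ₗ[F] U), Function.Surjective f ∧
      (∀ x : ↥q, f x = 0 ↔ (x : V) ∈ p) ∧
      (∀ (g : G) (x : ↥q), f ⟨ρ g x, hq g x x.2⟩ = σ g (f x))

end Defs

section Induced

variable {F : Type} [Field F] {H : Type} [Group H] (P : Subgroup H)
  {U : Type} [AddCommGroup U] [Module F U]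

/-- The carrier of the representation of `H` induced from the representation `ρU` of `P`:
the space of functions `f : H → U` with `f (p * h) = ρU p (f h)`. -/
def indCarrier (ρU : Representation F (↥P) U) : Submodule F (H → U) where
  carrier := {f | ∀ (p : ↥P) (h : H), f ((p : H) * h) = ρU p (f h)}
  add_mem' := by
    intro a b ha hb p h
    simp only [Pi.add_apply, ha p h, hb p h, map_add]
  zero_mem' := by
    intro p h
    simp
  smul_mem' := by
    intro c f hf p h
    simp only [Pi.smul_apply, hf p h, map_smul]

/-- The representation of `H` induced from the representation `ρU` of the subgroup `P`,
realized on the space `indCarrier P ρU` with `(x • f) h = f (h * x)`. -/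
def indRep (ρU : Representation F (↥P) U) : Representation F H ↥(indCarrier P ρU) where
  toFun x :=
    { toFun := fun f => ⟨fun h => (f : H → U) (h * x), by
        intro p h
        simpa [mul_assoc] using f.2 p (h * x)⟩
      map_add' := by intro f g; ext h; simp
      map_smul' := by intro c f; ext h; simp }
  map_one' := by
    ext f h
    simp
  map_mul' := by
    intro x y
    ext f h
    simp [mul_assoc]

end Induced


/-!
Suppose `V|_{Q ∩ N}` were simple, of dimension `n`, and write `a = dim U`. By Clifford, `W|_N` is
semisimple, so `V` is a quotient of it, and Frobenius reciprocity embeds `W` into `Ind_N^H V`: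
`dim W ≤ d n`. A simple `N`-summand `S ≅ V` of `W` is simple over `Q ∩ N`, and since `H = Q N`
every `H`-translate of `S` is a `Q`-conjugate of it, hence simple over `Q ∩ N` as well. So
`W|_{Q ∩ N}` is a sum of simple modules of dimension `n`, and `n` divides the dimension of each of
its submodules. By Mackey, the functions in `W` supported on `P gᵢ Q` form a `Q`-submodule of
dimension `Kᵢ a`; therefore `n ∣ gcd(K₁, K₂) a`. The two double cosets being disjoint,
`(K₁ + K₂) a ≤ dim W ≤ d n ≤ d gcd(K₁, K₂) a ≤ max(K₁, K₂) a`, which is absurd.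
-/

section SimpleSubrep

variable {F : Type} [Field F] {G : Type} [Group G] {V : Type} [AddCommGroup V] [Module F V]
  {V₀ : Type} [AddCommGroup V₀] [Module F V₀]

structure IsSimpleSubrep (ρ : Representation F G V) (S : Submodule F V) : Prop where
  isSubrep : IsSubrep ρ S
  ne_bot : S ≠ ⊥
  eq_bot_or_eq : ∀ Z ≤ S, IsSubrep ρ Z → Z = ⊥ ∨ Z = S

variable {ρ : Representation F G V} {σ : Representation F G V₀}

lemma IsIrredRep.nontrivial (hρ : IsIrredRep ρ) : Nontrivial V :=
  (Submodule.nontrivial_iff F).1 (nontrivial_of_ne _ _ hρ.1)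

lemma isSubrep_bot (ρ : Representation F G V) : IsSubrep ρ ⊥ := by
  intro g v hv
  rw [Submodule.mem_bot] at hv ⊢
  rw [hv, map_zero]

lemma isSubrep_iff_map_le {p : Submodule F V} : IsSubrep ρ p ↔ ∀ g, p.map (ρ g) ≤ p := by
  simp_rw [Submodule.map_le_iff_le_comap]
  rfl

lemma IsSubrep.inf {p q : Submodule F V} (hp : IsSubrep ρ p) (hq : IsSubrep ρ q) :
    IsSubrep ρ (p ⊓ q) :=
  fun g v hv => ⟨hp g v hv.1, hq g v hv.2⟩

lemma IsSubrep.sup {p q : Submodule F V} (hp : IsSubrep ρ p) (hq : IsSubrep ρ q) :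
    IsSubrep ρ (p ⊔ q) := by
  rw [isSubrep_iff_map_le] at *
  intro g
  rw [Submodule.map_sup]
  exact sup_le_sup (hp g) (hq g)

lemma Representation.IsIntertwiningMap.isSubrep_ker {φ : V →ₗ[F] V₀}
    (hφ : ρ.IsIntertwiningMap σ φ) : IsSubrep ρ (LinearMap.ker φ) := by
  intro g v hv
  rw [LinearMap.mem_ker] at hv ⊢
  rw [hφ.isIntertwining, hv, map_zero]

lemma Representation.IsIntertwiningMap.isSubrep_map {φ : V →ₗ[F] V₀}
    (hφ : ρ.IsIntertwiningMap σ φ) {p : Submodule F V} (hp : IsSubrep ρ p) :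
    IsSubrep σ (p.map φ) := by
  rintro g _ ⟨v, hv, rfl⟩
  rw [← hφ.isIntertwining]
  exact Submodule.mem_map_of_mem (hp g v hv)

lemma map_map_rep (ρ : Representation F G V) (g h : G) (S : Submodule F V) :
    (S.map (ρ g)).map (ρ h) = S.map (ρ (h * g)) := by
  rw [← Submodule.map_comp, map_mul, Module.End.mul_eq_comp]

lemma map_inv_map_rep (ρ : Representation F G V) (g : G) (S : Submodule F V) :
    (S.map (ρ g)).map (ρ g⁻¹) = S := by
  rw [map_map_rep, inv_mul_cancel, map_one, Module.End.one_eq_id, Submodule.map_id]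

lemma map_map_inv_rep (ρ : Representation F G V) (g : G) (S : Submodule F V) :
    (S.map (ρ g⁻¹)).map (ρ g) = S := by
  simpa using map_inv_map_rep ρ g⁻¹ S

lemma finrank_map_rep (ρ : Representation F G V) (g : G) (S : Submodule F V) :
    finrank F (S.map (ρ g)) = finrank F S :=
  (Submodule.equivMapOfInjective _ (ρ.apply_bijective g).injective S).finrank_eq.symm

lemma IsSubrep.map_eq {K : Subgroup G} {S : Submodule F V} (hS : IsSubrep (ρ.comp K.subtype) S)
    {k : G} (hk : k ∈ K) : S.map (ρ k) = S := by
  refine le_antisymm (isSubrep_iff_map_le.1 hS ⟨k, hk⟩) fun v hv => ?_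
  rw [← ρ.self_inv_apply k v]
  exact Submodule.mem_map_of_mem (hS ⟨k⁻¹, inv_mem hk⟩ v hv)

lemma IsSubrep.map_of_mem_normalizer {K : Subgroup G} {S : Submodule F V}
    (hS : IsSubrep (ρ.comp K.subtype) S) {g : G} (hg : g ∈ Subgroup.normalizer K) :
    IsSubrep (ρ.comp K.subtype) (S.map (ρ g)) := by
  rintro k _ ⟨v, hv, rfl⟩
  have hk : g⁻¹ * k * g ∈ K := by
    rw [Subgroup.mem_normalizer_iff.1 hg]
    simp [mul_assoc]
  have : ρ k (ρ g v) = ρ g (ρ (g⁻¹ * k * g) v) := by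
    simp only [map_mul, Module.End.mul_apply, ρ.self_inv_apply]
  rw [MonoidHom.comp_apply, Subgroup.coe_subtype, this]
  exact Submodule.mem_map_of_mem (hS ⟨_, hk⟩ v hv)

lemma IsSimpleSubrep.map_of_mem_normalizer {K : Subgroup G} {S : Submodule F V}
    (hS : IsSimpleSubrep (ρ.comp K.subtype) S) {g : G} (hg : g ∈ Subgroup.normalizer K) :
    IsSimpleSubrep (ρ.comp K.subtype) (S.map (ρ g)) where
  isSubrep := IsSubrep.map_of_mem_normalizer hS.isSubrep hg
  ne_bot h := hS.ne_bot (by rw [← map_inv_map_rep ρ g S, h, Submodule.map_bot])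
  eq_bot_or_eq Z hZS hZ := by
    have hZ' := IsSubrep.map_of_mem_normalizer hZ (inv_mem hg)
    have hZS' : Z.map (ρ g⁻¹) ≤ S := by
      simpa only [map_inv_map_rep] using Submodule.map_mono (f := ρ g⁻¹) hZS
    rw [← map_map_inv_rep ρ g Z]
    rcases hS.eq_bot_or_eq _ hZS' hZ' with h | h <;> rw [h]
    · exact Or.inl (Submodule.map_bot _)
    · exact Or.inr rfl

end SimpleSubrep

section Semisimple

variable {F : Type} [Field F] {G : Type} [Group G] {V : Type} [AddCommGroup V] [Module F V]
  {ρ : Representation F G V}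

lemma iSup_map_rep_eq_top (hρ : IsIrredRep ρ) {S : Submodule F V} (hS : S ≠ ⊥) :
    ⨆ g, S.map (ρ g) = ⊤ := by
  have hsub : IsSubrep ρ (⨆ g, S.map (ρ g)) := by
    refine isSubrep_iff_map_le.2 fun g => ?_
    rw [Submodule.map_iSup]
    exact iSup_le fun h => (map_map_rep ρ h g S).symm ▸ le_iSup (fun k => S.map (ρ k)) (g * h)
  refine (hρ.2 _ hsub).resolve_left fun h => hS (eq_bot_iff.2 ?_)
  calc S = S.map (ρ 1) := by rw [map_one, Module.End.one_eq_id, Submodule.map_id]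
    _ ≤ ⨆ g, S.map (ρ g) := le_iSup (fun g => S.map (ρ g)) 1
    _ = ⊥ := h

lemma exists_isSimpleSubrep [FiniteDimensional F V] [Nontrivial V] (ρ : Representation F G V) :
    ∃ S, IsSimpleSubrep ρ S := by
  obtain ⟨S, ⟨hS, hS_ne⟩, hmin⟩ := wellFounded_lt.has_min
    {S : Submodule F V | IsSubrep ρ S ∧ S ≠ ⊥} ⟨⊤, fun _ _ _ => trivial, top_ne_bot⟩
  refine ⟨S, hS, hS_ne, fun Z hZS hZ => or_iff_not_imp_left.2 fun hZ_ne => ?_⟩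
  exact hZS.eq_of_not_lt (hmin Z ⟨hZ, hZ_ne⟩)

/-- The complement is built greedily, adding one summand `s i` disjoint from what is already
there. -/
lemma exists_isCompl_dvd_finrank_of_iSup_eq_top [FiniteDimensional F V] {ι : Type*}
    {s : ι → Submodule F V} (hs : ∀ i, IsSimpleSubrep ρ (s i)) (hs_top : ⨆ i, s i = ⊤) {n : ℕ}
    (hn : ∀ i, finrank F (s i) = n) (M : Submodule F V) (hM : IsSubrep ρ M) :
    ∃ C, IsSubrep ρ C ∧ IsCompl M C ∧ n ∣ finrank F C := by
  induction M using WellFoundedGT.induction with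
  | _ M ih =>
    by_cases hM_top : M = ⊤
    · exact ⟨⊥, isSubrep_bot ρ, hM_top ▸ isCompl_top_bot, by simp⟩
    obtain ⟨i, hi⟩ : ∃ i, ¬ s i ≤ M := by
      by_contra! h
      exact hM_top (top_le_iff.1 (hs_top ▸ iSup_le h))
    have hdisj : Disjoint M (s i) := by
      rw [disjoint_iff]
      refine ((hs i).eq_bot_or_eq _ inf_le_right (hM.inf (hs i).isSubrep)).resolve_right
        fun h => hi (h ▸ inf_le_left)
    obtain ⟨C, hC, hMC, hdvd⟩ := ih (M ⊔ s i) (left_lt_sup.2 hi) (hM.sup (hs i).isSubrep)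
    refine ⟨s i ⊔ C, (hs i).isSubrep.sup hC,
      ⟨hdisj.disjoint_sup_right_of_disjoint_sup_left hMC.disjoint, ?_⟩, ?_⟩
    · rw [codisjoint_iff, ← sup_assoc]
      exact hMC.sup_eq_top
    · have hiC : Disjoint (s i) C := hMC.disjoint.mono_left le_sup_right
      have := Submodule.finrank_sup_add_finrank_inf_eq (s i) C
      rw [hiC.eq_bot, finrank_bot, add_zero, hn i] at this
      rw [this]
      exact (Nat.dvd_add_right dvd_rfl).2 hdvd

lemma exists_isCompl_of_isIrredRep [FiniteDimensional F V] (hρ : IsIrredRep ρ) {K : Subgroup G}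
    {S : Submodule F V} (hS : ∀ g, IsSimpleSubrep (ρ.comp K.subtype) (S.map (ρ g)))
    (M : Submodule F V) (hM : IsSubrep (ρ.comp K.subtype) M) :
    ∃ C, IsSubrep (ρ.comp K.subtype) C ∧ IsCompl M C ∧ finrank F S ∣ finrank F C := by
  have hS_ne : S ≠ ⊥ := by simpa [map_one, Module.End.one_eq_id] using (hS 1).ne_bot
  exact exists_isCompl_dvd_finrank_of_iSup_eq_top hS (iSup_map_rep_eq_top hρ hS_ne)
    (finrank_map_rep ρ · S) M hM

lemma finrank_dvd_finrank_of_isIrredRep [FiniteDimensional F V] (hρ : IsIrredRep ρ)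
    {K : Subgroup G} {S : Submodule F V}
    (hS : ∀ g, IsSimpleSubrep (ρ.comp K.subtype) (S.map (ρ g)))
    (M : Submodule F V) (hM : IsSubrep (ρ.comp K.subtype) M) :
    finrank F S ∣ finrank F M := by
  obtain ⟨C, -, hMC, hC⟩ := exists_isCompl_of_isIrredRep hρ hS M hM
  obtain ⟨T, -, hT, hdvd⟩ := exists_isCompl_of_isIrredRep hρ hS ⊥ (isSubrep_bot _)
  rw [eq_top_of_bot_isCompl hT, finrank_top, ← Submodule.finrank_add_eq_of_isCompl hMC] at hdvd
  exact (Nat.dvd_add_left hC).1 hdvd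

/-- Clifford: the `G`-translates of a simple `N`-subrepresentation are simple and span. -/
lemma exists_isCompl_of_normal [FiniteDimensional F V] (hρ : IsIrredRep ρ) (N : Subgroup G)
    [N.Normal] (M : Submodule F V) (hM : IsSubrep (ρ.comp N.subtype) M) :
    ∃ C, IsSubrep (ρ.comp N.subtype) C ∧ IsCompl M C := by
  have := hρ.nontrivial
  obtain ⟨Z, hZ⟩ := exists_isSimpleSubrep (ρ.comp N.subtype)
  obtain ⟨C, hC, hMC, -⟩ := exists_isCompl_of_isIrredRep hρ
    (fun g => hZ.map_of_mem_normalizer (Subgroup.subset_normalizer_of_normal (Set.mem_univ g)))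
    M hM
  exact ⟨C, hC, hMC⟩

end Semisimple

section Intertwining

variable {F : Type} [Field F] {G : Type} [Group G] {V : Type} [AddCommGroup V] [Module F V]
  {V₀ : Type} [AddCommGroup V₀] [Module F V₀] {ρ : Representation F G V}
  {σ : Representation F G V₀} {φ : V →ₗ[F] V₀}

lemma IsSimpleSubrep.bijective_domRestrict {S : Submodule F V} (hS : IsSimpleSubrep ρ S)
    (hσ : IsIrredRep σ) (hφ : ρ.IsIntertwiningMap σ φ) (hφS : ¬ S ≤ LinearMap.ker φ) :
    Function.Bijective (φ.domRestrict S) := by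
  constructor
  · rw [LinearMap.injective_domRestrict_iff, disjoint_iff]
    exact (hS.eq_bot_or_eq _ inf_le_left (hS.isSubrep.inf hφ.isSubrep_ker)).resolve_right
      fun h => hφS (h ▸ inf_le_right)
  · rw [← LinearMap.range_eq_top, LinearMap.range_domRestrict]
    exact (hσ.2 _ (hφ.isSubrep_map hS.isSubrep)).resolve_left
      fun h => hφS (LinearMap.le_ker_iff_map.2 h)

lemma isSimpleSubrep_of_bijective_domRestrict {S : Submodule F V} (hS : IsSubrep ρ S)
    (hσ : IsIrredRep σ) (hφ : ρ.IsIntertwiningMap σ φ)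
    (hbij : Function.Bijective (φ.domRestrict S)) : IsSimpleSubrep ρ S := by
  have hdisj : Disjoint S (LinearMap.ker φ) := LinearMap.injective_domRestrict_iff.1 hbij.1
  have hmap : S.map φ = ⊤ := LinearMap.range_domRestrict S φ ▸ LinearMap.range_eq_top.2 hbij.2
  refine ⟨hS, fun h => hσ.1 (by rw [← hmap, h, Submodule.map_bot]), fun Z hZS hZ => ?_⟩
  rcases hσ.2 _ (hφ.isSubrep_map hZ) with h | h
  · exact Or.inl ((hdisj.mono_left hZS).eq_bot_of_le (LinearMap.le_ker_iff_map.2 h))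
  · refine Or.inr (le_antisymm hZS fun v hv => ?_)
    obtain ⟨z, hz, hzv⟩ := Submodule.mem_map.1 (h ▸ Submodule.mem_top : φ v ∈ Z.map φ)
    have : z = v := congrArg Subtype.val (hbij.1 hzv : (⟨z, hZS hz⟩ : S) = ⟨v, hv⟩)
    exact this ▸ hz

lemma IsCompFactor.exists_surjective_isIntertwiningMap
    (hρ : ∀ M, IsSubrep ρ M → ∃ C, IsSubrep ρ C ∧ IsCompl M C) (h : IsCompFactor σ ρ) :
    ∃ φ : V →ₗ[F] V₀, Function.Surjective φ ∧ ρ.IsIntertwiningMap σ φ := by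
  obtain ⟨-, q, -, hq, -, f, hf, -, hfρ⟩ := h
  obtain ⟨C, hC, hqC⟩ := hρ q hq
  have hproj (g : G) (v : V) : q.projectionOnto C hqC (ρ g v) =
      ⟨ρ g (q.projectionOnto C hqC v), hq g _ (Submodule.coe_mem _)⟩ := by
    obtain ⟨a, ha, b, hb, rfl⟩ :=
      Submodule.mem_sup.1 (hqC.sup_eq_top ▸ Submodule.mem_top : v ∈ q ⊔ C)
    apply Subtype.ext
    simp only [map_add, Submodule.coe_add, Submodule.projectionOnto_apply_of_mem_left hqC ha,
      Submodule.projectionOnto_apply_of_mem_left hqC (hq g a ha),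
      (Submodule.projectionOnto_apply_eq_zero_iff hqC).2 hb,
      (Submodule.projectionOnto_apply_eq_zero_iff hqC).2 (hC g b hb), Submodule.coe_zero,
      map_zero]
  refine ⟨f ∘ₗ q.projectionOnto C hqC, hf.comp (Submodule.projectionOnto_surjective hqC),
    ⟨fun g v => ?_⟩⟩
  simp only [LinearMap.comp_apply, hproj, hfρ]

end Intertwining

section InducedRep

variable {F : Type} [Field F] {H : Type} [Group H] (X : Subgroup H)
  {U : Type} [AddCommGroup U] [Module F U] (τ : Representation F X U)

lemma mul_out_mk_inv_mem (h : H) : h * (((h⁻¹ : H) : H ⧸ X)).out ∈ X := by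
  obtain ⟨x, hx⟩ := QuotientGroup.mk_out_eq_mul X h⁻¹
  rw [hx, mul_inv_cancel_left]
  exact x.2

/-- The right coset `X h` is indexed by the left coset `h⁻¹ X`, and `f ∈ Ind_X^H U` is determined
by its values at the representatives `c.out⁻¹` of the right cosets. -/
lemma indCarrier_apply_eq (f : indCarrier X τ) (h : H) :
    (f : H → U) h = τ ⟨_, mul_out_mk_inv_mem X h⟩
      ((f : H → U) (((h⁻¹ : H) : H ⧸ X)).out⁻¹) := by
  simpa using f.2 ⟨_, mul_out_mk_inv_mem X h⟩ (((h⁻¹ : H) : H ⧸ X)).out⁻¹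

noncomputable def indEquiv : indCarrier X τ ≃ₗ[F] (H ⧸ X → U) where
  toFun f c := (f : H → U) c.out⁻¹
  map_add' _ _ := rfl
  map_smul' _ _ := rfl
  invFun v := ⟨fun h => τ ⟨_, mul_out_mk_inv_mem X h⟩ (v (h⁻¹ : H)), fun p h => by
    have hc : (((p * h : H)⁻¹ : H) : H ⧸ X) = ((h⁻¹ : H) : H ⧸ X) := by
      rw [mul_inv_rev]
      exact QuotientGroup.mk_mul_of_mem _ (inv_mem p.2)
    simp only [hc]
    rw [← Module.End.mul_apply, ← map_mul]
    congr 2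
    exact Subtype.ext (mul_assoc _ _ _)⟩
  left_inv f := Subtype.ext (funext fun h => (indCarrier_apply_eq X τ f h).symm)
  right_inv v := funext fun c => by
    simp only [inv_inv, QuotientGroup.out_eq', inv_mul_cancel]
    exact congrFun (congrArg DFunLike.coe (map_one τ)) (v c)

lemma indEquiv_apply (f : indCarrier X τ) (c : H ⧸ X) :
    indEquiv X τ f c = (f : H → U) c.out⁻¹ := rfl

variable [X.FiniteIndex] [FiniteDimensional F U]

instance : FiniteDimensional F (indCarrier X τ) :=
  Module.Finite.equiv (indEquiv X τ).symm

lemma finrank_indCarrier : finrank F (indCarrier X τ) = X.index * finrank F U := by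
  have := Fintype.ofFinite (H ⧸ X)
  rw [(indEquiv X τ).finrank_eq, Module.finrank_pi_fintype, Finset.sum_const, Finset.card_univ,
    smul_eq_mul, Subgroup.index, Nat.card_eq_fintype_card]

variable {X τ}

/-- The functions supported on the right cosets `X h` with `h⁻¹ X ∈ S`. -/
lemma exists_isSubrep_finrank_eq_ncard_mul {Y : Subgroup H} {S : Set (H ⧸ X)}
    (hS : ∀ y ∈ Y, ∀ c ∈ S, y • c ∈ S) :
    ∃ M, IsSubrep ((indRep X τ).comp Y.subtype) M ∧ finrank F M = S.ncard * finrank F U := by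
  classical
  let M₀ : Submodule F (H ⧸ X → U) := ⨅ c ∈ Sᶜ, LinearMap.ker (LinearMap.proj c)
  have hM₀ : M₀ ≃ₗ[F] (S → U) :=
    LinearMap.iInfKerProjEquiv F (fun _ => U) disjoint_compl_right (by simp)
  refine ⟨M₀.comap (indEquiv X τ).toLinearMap, fun y f hf => ?_, ?_⟩
  · simp only [M₀, Submodule.mem_comap, Submodule.mem_iInf, LinearMap.mem_ker,
      LinearMap.proj_apply, LinearEquiv.coe_coe, indEquiv_apply] at hf ⊢
    intro c hc
    have hyc : (y : H)⁻¹ • c ∉ S := fun h => hc (by simpa using hS _ y.2 _ h)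
    have hq : (((c.out⁻¹ * y : H)⁻¹ : H) : H ⧸ X) = (y : H)⁻¹ • c := by
      rw [mul_inv_rev, inv_inv, ← smul_eq_mul, ← MulAction.Quotient.smul_mk,
        QuotientGroup.out_eq']
    change (f : H → U) (c.out⁻¹ * y) = 0
    rw [indCarrier_apply_eq X τ f]
    simp only [hq, hf _ hyc, map_zero]
  · have := Fintype.ofFinite (H ⧸ X)
    rw [Submodule.comap_equiv_eq_map_symm, LinearEquiv.finrank_map_eq, hM₀.finrank_eq,
      Module.finrank_pi_fintype, Finset.sum_const, Finset.card_univ, smul_eq_mul,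
      ← Nat.card_eq_fintype_card, Nat.card_coe_set_eq]

end InducedRep

section Frobenius

variable {F : Type} [Field F] {H : Type} [Group H] {W : Type} [AddCommGroup W] [Module F W]
  {V₀ : Type} [AddCommGroup V₀] [Module F V₀]

/-- Frobenius reciprocity: `v ↦ (h ↦ φ (ρ h v))` embeds `W` into `Ind_N^H V₀`. -/
lemma finrank_le_index_mul_finrank {ρ : Representation F H W} (hρ : IsIrredRep ρ)
    {N : Subgroup H} [N.FiniteIndex] {σ : Representation F N V₀} [FiniteDimensional F V₀]
    {φ : W →ₗ[F] V₀} (hφ : Representation.IsIntertwiningMap (ρ.comp N.subtype) σ φ)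
    (hφ0 : φ ≠ 0) : finrank F W ≤ N.index * finrank F V₀ := by
  let Φ : W →ₗ[F] indCarrier N σ :=
    { toFun v := ⟨fun h => φ (ρ h v), fun n h => by
        change φ (ρ (n * h) v) = σ n (φ (ρ h v))
        rw [map_mul, Module.End.mul_apply]
        exact hφ.isIntertwining n _⟩
      map_add' _ _ := by ext; simp
      map_smul' _ _ := by ext; simp }
  have hΦ (v : W) (h : H) : (Φ v : H → V₀) h = φ (ρ h v) := rfl
  have hker : IsSubrep ρ (LinearMap.ker Φ) := by
    intro g v hv
    rw [LinearMap.mem_ker] at hv ⊢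
    ext h
    simpa [hΦ, ← Module.End.mul_apply, ← map_mul] using
      congrArg (fun f : indCarrier N σ => (f : H → V₀) (h * g)) hv
  have hinj : Function.Injective Φ := by
    rw [← LinearMap.ker_eq_bot]
    refine (hρ.2 _ hker).resolve_right fun h => hφ0 (LinearMap.ext fun v => ?_)
    have : Φ v = 0 := LinearMap.mem_ker.1 (h ▸ Submodule.mem_top)
    simpa [hΦ] using congrArg (fun f : indCarrier N σ => (f : H → V₀) 1) this
  rw [← finrank_indCarrier N σ]
  exact LinearMap.finrank_le_finrank_of_injective hinj

end Frobenius

section DoubleCoset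

open MulAction

variable {H : Type} [Group H] (P Q : Subgroup H)

lemma ncard_orbit_mk_inv (g : H) :
    (orbit Q ((g⁻¹ : H) : H ⧸ P)).ncard =
      Subgroup.relIndex (P.map (MulAut.conj g⁻¹).toMonoidHom) Q := by
  have hstab : stabilizer H ((g⁻¹ : H) : H ⧸ P) = P.map (MulAut.conj g⁻¹).toMonoidHom := by
    have hx : ((g⁻¹ : H) : H ⧸ P) = g⁻¹ • ((1 : H) : H ⧸ P) := by
      rw [MulAction.Quotient.smul_mk, smul_eq_mul, mul_one]
    rw [hx, stabilizer_smul_eq_stabilizer_map_conj, stabilizer_quotient]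
  rw [← index_stabilizer, Subgroup.relIndex, ← hstab]
  rfl

lemma disjoint_orbit_mk_inv {g₁ g₂ : H}
    (h : DoubleCoset.doubleCoset g₁ P Q ≠ DoubleCoset.doubleCoset g₂ P Q) :
    Disjoint (orbit Q ((g₁⁻¹ : H) : H ⧸ P)) (orbit Q ((g₂⁻¹ : H) : H ⧸ P)) := by
  rw [Set.disjoint_left]
  rintro _ ⟨q₁, rfl⟩ ⟨q₂, hq⟩
  change (q₂ : H) • ((g₂⁻¹ : H) : H ⧸ P) = (q₁ : H) • ((g₁⁻¹ : H) : H ⧸ P) at hq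
  rw [MulAction.Quotient.smul_mk, MulAction.Quotient.smul_mk, smul_eq_mul, smul_eq_mul,
    QuotientGroup.eq] at hq
  exact h (DoubleCoset.doubleCoset_eq_of_mem (DoubleCoset.mem_doubleCoset.2
    ⟨_, inv_mem hq, _, mul_mem (inv_mem q₂.2) q₁.2, by group⟩))

variable [P.FiniteIndex]

lemma relIndex_map_conj_pos (g : H) :
    0 < Subgroup.relIndex (P.map (MulAut.conj g⁻¹).toMonoidHom) Q := by
  rw [← ncard_orbit_mk_inv]
  exact (Set.ncard_pos (Set.toFinite _)).2 ⟨_, mem_orbit_self _⟩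

lemma relIndex_add_relIndex_le_index {g₁ g₂ : H}
    (h : DoubleCoset.doubleCoset g₁ P Q ≠ DoubleCoset.doubleCoset g₂ P Q) :
    Subgroup.relIndex (P.map (MulAut.conj g₁⁻¹).toMonoidHom) Q +
      Subgroup.relIndex (P.map (MulAut.conj g₂⁻¹).toMonoidHom) Q ≤ P.index := by
  rw [← ncard_orbit_mk_inv, ← ncard_orbit_mk_inv,
    ← Set.ncard_union_eq (disjoint_orbit_mk_inv P Q h)]
  exact Set.ncard_le_card _

/-- The functions in `Ind_P^H U` supported on the double coset `P g Q`. -/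
lemma exists_isSubrep_finrank_eq_relIndex_mul {F : Type} [Field F] {U : Type} [AddCommGroup U]
    [Module F U] [FiniteDimensional F U] (τ : Representation F P U) (g : H) :
    ∃ M, IsSubrep ((indRep P τ).comp Q.subtype) M ∧
      finrank F M = Subgroup.relIndex (P.map (MulAut.conj g⁻¹).toMonoidHom) Q * finrank F U := by
  rw [← ncard_orbit_mk_inv]
  exact exists_isSubrep_finrank_eq_ncard_mul fun y hy _ hc =>
    mem_orbit_of_mem_orbit (⟨y, hy⟩ : Q) hc

end DoubleCoset

section Restriction

variable {F : Type} [Field F] {H : Type} [Group H] {W : Type} [AddCommGroup W] [Module F W]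
  {V₀ : Type} [AddCommGroup V₀] [Module F V₀] {ρ : Representation F H W}

lemma isSubrep_comp_subgroupOf_iff {K N : Subgroup H} (hKN : K ≤ N) {p : Submodule F W} :
    IsSubrep ((ρ.comp N.subtype).comp (K.subgroupOf N).subtype) p ↔
      IsSubrep (ρ.comp K.subtype) p :=
  ⟨fun h k => h ⟨⟨k, hKN k.2⟩, k.2⟩, fun h k => h ⟨k, k.2⟩⟩

lemma IsSimpleSubrep.of_comp_subgroupOf {K N : Subgroup H} (hKN : K ≤ N) {S : Submodule F W}
    (hS : IsSimpleSubrep ((ρ.comp N.subtype).comp (K.subgroupOf N).subtype) S) :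
    IsSimpleSubrep (ρ.comp K.subtype) S where
  isSubrep := (isSubrep_comp_subgroupOf_iff hKN).1 hS.isSubrep
  ne_bot := hS.ne_bot
  eq_bot_or_eq Z hZS hZ := hS.eq_bot_or_eq Z hZS ((isSubrep_comp_subgroupOf_iff hKN).2 hZ)

/-- A simple `N`-subrepresentation `S` on which `φ` does not vanish is isomorphic to `V₀`, hence
simple over `Q ∩ N`; as `H = Q N`, its `H`-translates are its `Q`-translates, which are simple over
`Q ∩ N` too. -/
lemma finrank_dvd_finrank_of_isIrredRep_comp_inf [FiniteDimensional F W] (hρ : IsIrredRep ρ)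
    {N Q : Subgroup H} [N.Normal] (hQN : ∀ h : H, ∃ q ∈ Q, ∃ n ∈ N, h = q * n)
    {σ : Representation F N V₀} (hσ : IsIrredRep σ)
    (hσQN : IsIrredRep (σ.comp ((Q ⊓ N).subgroupOf N).subtype)) {φ : W →ₗ[F] V₀}
    (hφ : Representation.IsIntertwiningMap (ρ.comp N.subtype) σ φ) (hφ0 : φ ≠ 0)
    (M : Submodule F W) (hM : IsSubrep (ρ.comp (Q ⊓ N).subtype) M) :
    finrank F V₀ ∣ finrank F M := by
  have := hρ.nontrivial
  have hN (g : H) : g ∈ Subgroup.normalizer N :=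
    Subgroup.subset_normalizer_of_normal (Set.mem_univ g)
  obtain ⟨Z, hZ⟩ := exists_isSimpleSubrep (ρ.comp N.subtype)
  obtain ⟨g, hg⟩ : ∃ g, ¬ Z.map (ρ g) ≤ LinearMap.ker φ := by
    by_contra! h
    exact hφ0 (LinearMap.ker_eq_top.1
      (top_le_iff.1 (iSup_map_rep_eq_top hρ hZ.ne_bot ▸ iSup_le h)))
  set S := Z.map (ρ g)
  have hS : IsSimpleSubrep (ρ.comp N.subtype) S := hZ.map_of_mem_normalizer (hN g)
  have hbij := hS.bijective_domRestrict hσ hφ hg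
  have hS_QN : IsSimpleSubrep (ρ.comp (Q ⊓ N).subtype) S :=
    (isSimpleSubrep_of_bijective_domRestrict
      ((isSubrep_comp_subgroupOf_iff inf_le_right).2 fun k => hS.isSubrep ⟨k, k.2.2⟩) hσQN
      ⟨fun k => hφ.isIntertwining _⟩ hbij).of_comp_subgroupOf inf_le_right
  rw [← (LinearEquiv.ofBijective _ hbij).finrank_eq]
  refine finrank_dvd_finrank_of_isIrredRep hρ (fun h => ?_) M hM
  obtain ⟨q, hq, n, hn, rfl⟩ := hQN h
  rw [← map_map_rep, hS.isSubrep.map_eq hn]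
  exact hS_QN.map_of_mem_normalizer
    (Subgroup.inf_normalizer_le_normalizer_inf ⟨Subgroup.le_normalizer hq, hN q⟩)

end Restriction

lemma mul_lt_add_mul_of_dvd_mul {a n d K₁ K₂ : ℕ} (ha : 0 < a) (hK₁ : 0 < K₁) (hK₂ : 0 < K₂)
    (h₁ : n ∣ K₁ * a) (h₂ : n ∣ K₂ * a) (hgcd : d * K₁.gcd K₂ ≤ max K₁ K₂) :
    d * n < (K₁ + K₂) * a := by
  have hn : n ≤ K₁.gcd K₂ * a :=
    Nat.le_of_dvd (by positivity) (Nat.gcd_mul_right K₁ a K₂ ▸ Nat.dvd_gcd h₁ h₂)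
  calc d * n ≤ d * (K₁.gcd K₂ * a) := Nat.mul_le_mul_left d hn
    _ = d * K₁.gcd K₂ * a := (mul_assoc _ _ _).symm
    _ ≤ max K₁ K₂ * a := Nat.mul_le_mul_right a hgcd
    _ < (K₁ + K₂) * a := Nat.mul_lt_mul_of_pos_right (max_lt_iff.2 ⟨by omega, by omega⟩) ha

theorem statement_5_general
    {F : Type} [Field F]
    {H : Type} [Group H] [Finite H]
    (N : Subgroup H) [N.Normal] {d : ℕ}
    (hd : Nat.card (H ⧸ N) = d)
    (P Q : Subgroup H)
    (hQN : ∀ h : H, ∃ q ∈ Q, ∃ n ∈ N, h = q * n)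
    (g₁ g₂ : H)
    (hdc : {x : H | ∃ p ∈ P, ∃ q ∈ Q, x = p * g₁ * q} ≠
           {x : H | ∃ p ∈ P, ∃ q ∈ Q, x = p * g₂ * q})
    {U : Type} [AddCommGroup U] [Module F U] [FiniteDimensional F U]
    (ρU : Representation F (↥P) U)
    -- `W := Ind_P^H U` is a simple `F[H]`-module
    (hW : IsIrredRep (indRep P ρU))
    -- `K_i = [Q : (g_i⁻¹ P g_i) ∩ Q]`
    (K₁ K₂ : ℕ)
    (hK₁ : K₁ = Subgroup.relIndex (P.map (MulAut.conj g₁⁻¹).toMonoidHom) Q)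
    (hK₂ : K₂ = Subgroup.relIndex (P.map (MulAut.conj g₂⁻¹).toMonoidHom) Q)
    (hgcd : d * Nat.gcd K₁ K₂ ≤ max K₁ K₂) :
    ∀ (V₀ : Type) [AddCommGroup V₀] [Module F V₀],
      ∀ σ : Representation F (↥N) V₀, IsIrredRep σ →
        IsCompFactor σ ((indRep P ρU).comp N.subtype) →
        ¬ IsIrredRep (σ.comp (((Q ⊓ N).subgroupOf N).subtype)) := by
  intro V₀ _ _ σ hσ hcf hσQN
  have := hσ.nontrivial
  obtain ⟨φ, hφ_surj, hφ⟩ :=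
    hcf.exists_surjective_isIntertwiningMap (exists_isCompl_of_normal hW N)
  have := Module.Finite.of_surjective φ hφ_surj
  have hφ0 : φ ≠ 0 := fun h => by
    obtain ⟨v, hv⟩ := exists_ne (0 : V₀)
    obtain ⟨w, rfl⟩ := hφ_surj v
    exact hv (by rw [h, LinearMap.zero_apply])
  have hdvd (g : H) : finrank F V₀ ∣
      Subgroup.relIndex (P.map (MulAut.conj g⁻¹).toMonoidHom) Q * finrank F U := by
    obtain ⟨M, hM, hdim⟩ := exists_isSubrep_finrank_eq_relIndex_mul P Q ρU g
    exact hdim ▸ finrank_dvd_finrank_of_isIrredRep_comp_inf hW hQN hσ hσQN hφ hφ0 M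
      fun k => hM ⟨k, k.2.1⟩
  have hU : 0 < finrank F U := by
    have := hW.nontrivial
    exact Nat.pos_of_mul_pos_left (finrank_indCarrier P ρU ▸ Module.finrank_pos)
  have hlt := mul_lt_add_mul_of_dvd_mul hU (hK₁ ▸ relIndex_map_conj_pos P Q g₁)
    (hK₂ ▸ relIndex_map_conj_pos P Q g₂) (hK₁ ▸ hdvd g₁) (hK₂ ▸ hdvd g₂) hgcd
  have hdc' : DoubleCoset.doubleCoset g₁ P Q ≠ DoubleCoset.doubleCoset g₂ P Q := fun h =>
    hdc (by simpa only [Set.ext_iff, DoubleCoset.mem_doubleCoset, SetLike.mem_coe,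
      Set.mem_ofPred_eq] using h)
  have hsum : K₁ + K₂ ≤ P.index := hK₁ ▸ hK₂ ▸ relIndex_add_relIndex_le_index P Q hdc'
  have hfrob := finrank_le_index_mul_finrank hW hφ hφ0
  rw [finrank_indCarrier, show N.index = d from hd] at hfrob
  exact (hlt.trans_le ((Nat.mul_le_mul_right _ hsum).trans hfrob)).false

theorem statement_5
    {F : Type} [Field F] [IsAlgClosed F]
    {H : Type} [Group H] [Finite H]
    (N : Subgroup H) [N.Normal] {d : ℕ}
    (hcyc : IsCyclic (H ⧸ N)) (hd : Nat.card (H ⧸ N) = d)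
    (P Q : Subgroup H)
    (hQN : ∀ h : H, ∃ q ∈ Q, ∃ n ∈ N, h = q * n)
    (g₁ g₂ : H)
    (hdc : {x : H | ∃ p ∈ P, ∃ q ∈ Q, x = p * g₁ * q} ≠
           {x : H | ∃ p ∈ P, ∃ q ∈ Q, x = p * g₂ * q})
    {U : Type} [AddCommGroup U] [Module F U] [FiniteDimensional F U]
    (ρU : Representation F (↥P) U)
    -- `W := Ind_P^H U` is a simple `F[H]`-module
    (hW : IsIrredRep (indRep P ρU))
    -- `K_i = [Q : (g_i⁻¹ P g_i) ∩ Q]`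
    (K₁ K₂ : ℕ)
    (hK₁ : K₁ = Subgroup.relIndex (P.map (MulAut.conj g₁⁻¹).toMonoidHom) Q)
    (hK₂ : K₂ = Subgroup.relIndex (P.map (MulAut.conj g₂⁻¹).toMonoidHom) Q)
    (hgcd : d * Nat.gcd K₁ K₂ ≤ max K₁ K₂) :
    ∀ (V₀ : Type) [AddCommGroup V₀] [Module F V₀],
      ∀ σ : Representation F (↥N) V₀, IsIrredRep σ →
        IsCompFactor σ ((indRep P ρU).comp N.subtype) →
        ¬ IsIrredRep (σ.comp (((Q ⊓ N).subgroupOf N).subtype)) :=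
  statement_5_general N hd P Q hQN g₁ g₂ hdc ρU hW K₁ K₂ hK₁ hK₂ hgcd
end

section
/- Let F be an algebraically closed field, G a finite group, and P ≤ G a subgroup. Let U and V be finite-dimensional simple F[G]-modules such that dim_F End_{F[P]}(Res^G_P U) ≥ 2 and dim_F End_{F[P]}(Res^G_P V) ≥ 2, and such that the induced module W := Ind_P^G(1_P) satisfies condition (★). Then the tensor product U ⊗_F V, with the diagonal G-action, is not a simple F[G]-module. -/
open Module Pointwise

variable {F : Type} [Field F]

section Defs

variable {G : Type} [Group G] {V : Type} [AddCommGroup V] [Module F V]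

def repCommutant (ρ : Representation F G V) : Submodule F (V →ₗ[F] V) where
  carrier := {f | ∀ g : G, f ∘ₗ ρ g = ρ g ∘ₗ f}
  add_mem' := by
    intro a b ha hb g
    rw [LinearMap.add_comp, LinearMap.comp_add, ha g, hb g]
  zero_mem' := by
    intro g
    rw [LinearMap.zero_comp, LinearMap.comp_zero]
  smul_mem' := by
    intro c f hf g
    rw [LinearMap.smul_comp, LinearMap.comp_smul, hf g]

def TrivialOn (ρ : Representation F G V) (p : Submodule F V) : Prop :=
  ∀ (g : G) (v : V), v ∈ p → ρ g v = v

def StarCond (ρ : Representation F G V) : Prop :=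
  (∃ T A : Submodule F V, IsSubrep ρ T ∧ IsSubrep ρ A ∧ IsCompl T A ∧
      finrank F T = 1 ∧ TrivialOn ρ T ∧
      A ≠ ⊥ ∧ (∀ p : Submodule F V, p ≤ A → IsSubrep ρ p → p = ⊥ ∨ p = A) ∧
      ¬ TrivialOn ρ A) ∨
  (∃ W₁ W₂ : Submodule F V, IsSubrep ρ W₁ ∧ IsSubrep ρ W₂ ∧
      ⊥ < W₁ ∧ W₁ < W₂ ∧ W₂ < ⊤ ∧
      (∀ p : Submodule F V, IsSubrep ρ p → p = ⊥ ∨ p = W₁ ∨ p = W₂ ∨ p = ⊤) ∧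
      finrank F W₁ = 1 ∧ TrivialOn ρ W₁ ∧
      finrank F (V ⧸ W₂) = 1 ∧ (∀ (g : G) (v : V), ρ g v - v ∈ W₂) ∧
      ¬ (∀ (g : G) (v : V), v ∈ W₂ → ρ g v - v ∈ W₁))

end Defs

/-!
Suppose `U ⊗ V` is simple. Take `a ∈ End_P U`, `b ∈ End_P V` and let `a_c`, `b_c` be their
`G`-conjugates indexed by the cosets `c ∈ G ⧸ P`. The operator `∑_c a_c ⊗ b_c` commutes with `G`,
so by Schur it is a scalar `λ`. The `G`-maps `φ : End U → W = F[G ⧸ P]`, `x ↦ (tr (a_c x))_c`, and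
`ψ : W → End V`, `w ↦ ∑_c w_c b_c`, then satisfy `ψ (φ x) = λ tr x • 1` (test both sides against
every `y ∈ End V` with the trace pairing), so `(g - 1) (range φ) ⊆ ker ψ`.
As `End_P` has dimension at least `2` while `End_G` consists of scalars, `a` and `b` can be taken
non-`G`-invariant; then `G` acts non-trivially on `range φ` and on `W ⧸ ker ψ`. Neither of the two
shapes of `W` allowed by (★) admits such a pair of submodules.
-/
open Representation

section Commutant

variable {G : Type} [Group G] {M : Type} [AddCommGroup M] [Module F M]
  {ρ : Representation F G M}

lemma linHom_self_apply_eq_iff (g : G) (f : M →ₗ[F] M) :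
    linHom ρ ρ g f = f ↔ f ∘ₗ ρ g = ρ g ∘ₗ f := by
  rw [linHom_apply]
  constructor
  · intro h
    conv_lhs => rw [← h]
    ext v
    simp
  · intro h
    rw [← LinearMap.comp_assoc, ← h]
    ext v
    simp

lemma mem_repCommutant_iff {f : M →ₗ[F] M} :
    f ∈ repCommutant ρ ↔ ∀ g, linHom ρ ρ g f = f := by
  simp only [linHom_self_apply_eq_iff]
  rfl

lemma IsIrredRep.nontrivial_s11 (h : IsIrredRep ρ) : Nontrivial M := by
  rw [← not_subsingleton_iff_nontrivial]
  intro _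
  exact h.1 (Subsingleton.elim _ _)

lemma IsIrredRep.exists_eq_smul_id [IsAlgClosed F] [FiniteDimensional F M]
    (h : IsIrredRep ρ) {f : M →ₗ[F] M} (hf : f ∈ repCommutant ρ) :
    ∃ c : F, f = c • LinearMap.id := by
  have := h.nontrivial_s11
  obtain ⟨c, hc⟩ := Module.End.exists_eigenvalue f
  refine ⟨c, ?_⟩
  have hsub : IsSubrep ρ (Module.End.eigenspace f c) := by
    intro g v hv
    rw [Module.End.mem_eigenspace_iff] at hv ⊢
    rw [← LinearMap.comp_apply, hf g, LinearMap.comp_apply, hv, map_smul]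
  obtain hbot | htop := h.2 _ hsub
  · exact absurd hbot hc
  · ext v
    simpa using Module.End.mem_eigenspace_iff.mp (htop ▸ Submodule.mem_top (x := v))

lemma IsIrredRep.finrank_repCommutant_le_one [IsAlgClosed F] [FiniteDimensional F M]
    (h : IsIrredRep ρ) : finrank F (repCommutant ρ) ≤ 1 := by
  have hle : repCommutant ρ ≤ Submodule.span F {LinearMap.id} := fun f hf => by
    obtain ⟨c, rfl⟩ := h.exists_eq_smul_id hf
    exact Submodule.smul_mem _ _ (Submodule.mem_span_singleton_self _)
  exact (Submodule.finrank_mono hle).trans ((finrank_span_le_card _).trans (by simp))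

lemma IsIrredRep.exists_linHom_fixed_by_subgroup_not_fixed [IsAlgClosed F]
    [FiniteDimensional F M] (h : IsIrredRep ρ) (P : Subgroup G)
    (h2 : 2 ≤ finrank F (repCommutant (ρ.comp P.subtype))) :
    ∃ a : M →ₗ[F] M, (∀ p ∈ P, linHom ρ ρ p a = a) ∧ ∃ g, linHom ρ ρ g a ≠ a := by
  obtain ⟨a, haP, haG⟩ : ∃ a ∈ repCommutant (ρ.comp P.subtype), a ∉ repCommutant ρ := by
    by_contra! hle
    have := Submodule.finrank_mono (R := F) (show _ ≤ repCommutant ρ from hle)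
    linarith [h.finrank_repCommutant_le_one]
  rw [mem_repCommutant_iff] at haP haG
  push Not at haG
  exact ⟨a, fun p hp => haP ⟨p, hp⟩, haG⟩

end Commutant

lemma Representation.Subrepresentation.isSubrep {G W : Type} [Group G] [AddCommGroup W]
    [Module F W] {ρ : Representation F G W} (S : Subrepresentation ρ) :
    IsSubrep ρ S.toSubmodule :=
  fun g _ hv => S.apply_mem_toSubmodule g hv

lemma Representation.IntertwiningMap.sub_mem_ker_of_mem_range {G X W Y : Type} [Group G]
    [AddCommGroup X] [Module F X] [AddCommGroup W] [Module F W] [AddCommGroup Y] [Module F Y]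
    {σ : Representation F G X} {ρ : Representation F G W} {τ : Representation F G Y}
    (φ : IntertwiningMap σ ρ) (ψ : IntertwiningMap ρ τ) (h : ∀ x, ψ (φ x) ∈ τ.invariants)
    (g : G) : ∀ w ∈ φ.range.toSubmodule, ρ g w - w ∈ ψ.ker.toSubmodule := by
  rintro _ ⟨x, rfl⟩
  simp only [ker_toSubmodule, LinearMap.mem_ker, map_sub, toLinearMap_apply]
  rw [isIntertwining, h x g, sub_self]

section Trace

open LinearMap (trace trace_comp_comm' trace_smulRight)

variable {M : Type} [AddCommGroup M] [Module F M] [FiniteDimensional F M]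

lemma LinearMap.ext_of_trace_comp {a b : M →ₗ[F] M}
    (h : ∀ x : M →ₗ[F] M, trace F M (a ∘ₗ x) = trace F M (b ∘ₗ x)) : a = b := by
  have comp_smulRight (f : M →ₗ[F] M) (φ : Module.Dual F M) (u : M) :
      f ∘ₗ φ.smulRight u = φ.smulRight (f u) := by
    ext; simp
  ext u
  rw [← sub_eq_zero, ← Module.forall_dual_apply_eq_zero_iff F]
  intro φ
  have hφ := h (φ.smulRight u)
  rw [comp_smulRight, comp_smulRight, trace_smulRight, trace_smulRight] at hφ
  rw [map_sub, hφ, sub_self]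

lemma trace_linHom_comp_linHom {G : Type} [Group G] (ρ : Representation F G M) (g : G)
    (a x : M →ₗ[F] M) :
    trace F M (linHom ρ ρ g a ∘ₗ linHom ρ ρ g x) = trace F M (a ∘ₗ x) := by
  have hcancel : ρ g⁻¹ ∘ₗ ρ g = LinearMap.id := by
    rw [← Module.End.mul_eq_comp, ← map_mul, inv_mul_cancel, map_one, Module.End.one_eq_id]
  simp only [linHom_apply, LinearMap.comp_assoc]
  rw [← LinearMap.comp_assoc _ (ρ g) (ρ g⁻¹), hcancel, LinearMap.id_comp, trace_comp_comm',
    LinearMap.comp_assoc, LinearMap.comp_assoc, hcancel, LinearMap.comp_id]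

end Trace

section Coset

open LinearMap (trace)

variable {G : Type} [Group G] (P : Subgroup G)

section Orbit

variable {X : Type} [AddCommGroup X] [Module F X] (σ : Representation F G X)
  {x : X} (hx : ∀ p ∈ P, σ p x = x)

def cosetOrbit : G ⧸ P → X :=
  Quotient.lift (fun g => σ g x) fun g g' hg => by
    show σ g x = σ g' x
    conv_lhs => rw [← hx _ (QuotientGroup.leftRel_apply.mp hg)]
    rw [← Module.End.mul_apply, ← map_mul, mul_inv_cancel_left]

lemma cosetOrbit_mk (g : G) : cosetOrbit P σ hx g = σ g x := rfl

lemma cosetOrbit_smul (g : G) (c : G ⧸ P) :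
    cosetOrbit P σ hx (g • c) = σ g (cosetOrbit P σ hx c) := by
  induction c using QuotientGroup.induction_on with
  | H h => rw [MulAction.Quotient.smul_mk, cosetOrbit_mk, cosetOrbit_mk, smul_eq_mul, map_mul,
      Module.End.mul_apply]

/-- Frobenius reciprocity: the `G`-map `F[G ⧸ P] → X` determined by the `P`-fixed vector `x`. -/
noncomputable def cosetLift : IntertwiningMap (ofMulAction F G (G ⧸ P)) σ where
  toLinearMap := Finsupp.linearCombination F (cosetOrbit P σ hx) ∘ₗ
    (MonoidAlgebra.coeffLinearEquiv F).toLinearMap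
  isIntertwining' g := by
    ext c
    simp [ofMulAction_def, Finsupp.linearCombination_mapDomain, Finsupp.apply_linearCombination,
      cosetOrbit_smul, Function.comp_def]

lemma cosetLift_single (c : G ⧸ P) (r : F) :
    cosetLift P σ hx (MonoidAlgebra.single c r) = r • cosetOrbit P σ hx c := by
  simp [cosetLift]

lemma cosetLift_apply [Fintype (G ⧸ P)] (w : MonoidAlgebra F (G ⧸ P)) :
    cosetLift P σ hx w = ∑ c, w.coeff c • cosetOrbit P σ hx c := by
  simp [cosetLift, Finsupp.linearCombination_apply, Finsupp.sum_fintype]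

variable {σ} in
lemma exists_sub_not_mem_ker_cosetLift (hG : ∃ g, σ g x ≠ x) :
    ∃ g w, ofMulAction F G (G ⧸ P) g w - w ∉ (cosetLift P σ hx).ker.toSubmodule := by
  obtain ⟨g, hg⟩ := hG
  refine ⟨g, MonoidAlgebra.single ((1 : G) : G ⧸ P) 1, fun hker => hg ?_⟩
  rw [IntertwiningMap.ker_toSubmodule, LinearMap.mem_ker, map_sub, ofMulAction_single,
    MulAction.Quotient.smul_mk, smul_eq_mul, mul_one, sub_eq_zero] at hker
  simpa [cosetLift_single, cosetOrbit_mk] using hker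

end Orbit

variable {M : Type} [AddCommGroup M] [Module F M] [FiniteDimensional F M]
  (ρ : Representation F G M) {a : M →ₗ[F] M} (ha : ∀ p ∈ P, linHom ρ ρ p a = a)

/-- `x ↦ (tr (a_c ∘ x))_c`, the map dual to `cosetLift` under the trace pairing. -/
noncomputable def cosetTrace [Finite (G ⧸ P)] :
    IntertwiningMap (linHom ρ ρ) (ofMulAction F G (G ⧸ P)) where
  toLinearMap := (MonoidAlgebra.coeffLinearEquiv F).symm.toLinearMap ∘ₗ
    (Finsupp.linearEquivFunOnFinite F F (G ⧸ P)).symm.toLinearMap ∘ₗ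
    LinearMap.pi fun c => trace F M ∘ₗ LinearMap.llcomp F M M M (cosetOrbit P (linHom ρ ρ) ha c)
  isIntertwining' g := by
    ext x : 1
    apply MonoidAlgebra.coeff_injective
    ext c
    simp only [LinearMap.comp_apply, coeff_ofMulAction]
    show trace F M (cosetOrbit P _ ha c ∘ₗ linHom ρ ρ g x) =
      trace F M (cosetOrbit P _ ha (g⁻¹ • c) ∘ₗ x)
    rw [← trace_linHom_comp_linHom ρ g (cosetOrbit P _ ha (g⁻¹ • c)), ← cosetOrbit_smul,
      smul_inv_smul]

variable {ρ} in
lemma coeff_cosetTrace [Finite (G ⧸ P)] (x : M →ₗ[F] M) (c : G ⧸ P) :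
    (cosetTrace P ρ ha x).coeff c = trace F M (cosetOrbit P (linHom ρ ρ) ha c ∘ₗ x) := rfl

variable {ρ} in
lemma not_trivialOn_range_cosetTrace [Finite (G ⧸ P)] (hG : ∃ g, linHom ρ ρ g a ≠ a) :
    ¬ TrivialOn (ofMulAction F G (G ⧸ P)) (cosetTrace P ρ ha).range.toSubmodule := by
  intro htriv
  obtain ⟨g, hg⟩ := hG
  refine hg (LinearMap.ext_of_trace_comp fun x => ?_)
  have := congr_arg (·.coeff ((1 : G) : G ⧸ P)) (htriv g⁻¹ _ ⟨x, rfl⟩)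
  rwa [coeff_ofMulAction, inv_inv, MulAction.Quotient.smul_mk, smul_eq_mul, mul_one,
    IntertwiningMap.toLinearMap_apply, coeff_cosetTrace, coeff_cosetTrace, cosetOrbit_mk,
    cosetOrbit_mk, map_one, Module.End.one_apply] at this

end Coset

section Tensor

open LinearMap (trace trace_tensorProduct')
open TensorProduct (map map_comp)
open scoped TensorProduct

variable {G : Type} [Group G] (P : Subgroup G)
  {U : Type} [AddCommGroup U] [Module F U] {V : Type} [AddCommGroup V] [Module F V]
  {ρU : Representation F G U} {ρV : Representation F G V}

lemma linHom_tprod_map (g : G) (f : U →ₗ[F] U) (h : V →ₗ[F] V) :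
    linHom (ρU.tprod ρV) (ρU.tprod ρV) g (map f h) =
      map (linHom ρU ρU g f) (linHom ρV ρV g h) := by
  simp only [linHom_apply, Representation.tprod_apply, ← map_comp]

variable [Fintype (G ⧸ P)]
  {a : U →ₗ[F] U} (ha : ∀ p ∈ P, linHom ρU ρU p a = a)
  {b : V →ₗ[F] V} (hb : ∀ p ∈ P, linHom ρV ρV p b = b)

lemma sum_map_cosetOrbit_mem_repCommutant :
    ∑ c, map (cosetOrbit P (linHom ρU ρU) ha c) (cosetOrbit P (linHom ρV ρV) hb c) ∈
      repCommutant (ρU.tprod ρV) := by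
  rw [mem_repCommutant_iff]
  intro g
  simp only [map_sum, linHom_tprod_map, ← cosetOrbit_smul]
  exact Fintype.sum_bijective (g • ·) (MulAction.bijective g) _ _ fun _ => rfl

lemma exists_cosetLift_cosetTrace_eq_smul_id [IsAlgClosed F] [FiniteDimensional F U]
    [FiniteDimensional F V] (hirr : IsIrredRep (ρU.tprod ρV)) :
    ∃ c : F, ∀ x, cosetLift P (linHom ρV ρV) hb (cosetTrace P ρU ha x) =
      (c * trace F U x) • LinearMap.id := by
  obtain ⟨c, hc⟩ := hirr.exists_eq_smul_id (sum_map_cosetOrbit_mem_repCommutant P ha hb)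
  refine ⟨c, fun x => LinearMap.ext_of_trace_comp fun y => ?_⟩
  set A := cosetOrbit P (linHom ρU ρU) ha
  set B := cosetOrbit P (linHom ρV ρV) hb
  calc trace F V (cosetLift P (linHom ρV ρV) hb (cosetTrace P ρU ha x) ∘ₗ y)
      = ∑ i, trace F U (A i ∘ₗ x) * trace F V (B i ∘ₗ y) := by
        simp [cosetLift_apply, coeff_cosetTrace, ← Module.End.mul_eq_comp, Finset.sum_mul, A, B]
    _ = ∑ i, trace F (U ⊗[F] V) (map (A i) (B i) ∘ₗ map x y) := by
        simp only [← map_comp, trace_tensorProduct']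
    _ = trace F (U ⊗[F] V) ((∑ i, map (A i) (B i)) ∘ₗ map x y) := by
        simp only [← Module.End.mul_eq_comp, Finset.sum_mul, map_sum]
    _ = trace F V ((c * trace F U x) • LinearMap.id ∘ₗ y) := by
        rw [hc]
        simp only [LinearMap.smul_comp, LinearMap.id_comp, map_smul, trace_tensorProduct',
          smul_eq_mul, mul_assoc]

end Tensor

section StarCond

variable {G : Type} [Group G] {W : Type} [AddCommGroup W] [Module F W]
  {ρ : Representation F G W}

lemma not_starCond_of_forall_sub_mem {S K : Submodule F W} (hS : IsSubrep ρ S)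
    (hK : IsSubrep ρ K) (hSK : ∀ g, ∀ s ∈ S, ρ g s - s ∈ K) (hS_nontriv : ¬ TrivialOn ρ S)
    (hK_nontriv : ∃ g w, ρ g w - w ∉ K) : ¬ StarCond ρ := by
  obtain ⟨g₀, w₀, hw₀⟩ := hK_nontriv
  rintro (⟨T, A, -, hA, hTA, -, hT, -, hA_simple, -⟩ |
    ⟨W₁, W₂, -, -, -, -, -, hchain, -, hW₁, -, hW₂, hnot⟩)
  · have hdiff_mem : ∀ g w, ρ g w - w ∈ A := by
      intro g w
      obtain ⟨t, ht, x, hx, rfl⟩ :=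
        Submodule.mem_sup.mp (hTA.sup_eq_top ▸ Submodule.mem_top (x := w))
      rw [map_add, hT g t ht, add_sub_add_left_eq_sub]
      exact A.sub_mem (hA g x hx) hx
    have hAK : A ⊓ K = ⊥ :=
      (hA_simple _ inf_le_left fun g v hv => ⟨hA g v hv.1, hK g v hv.2⟩).resolve_right
        fun h => hw₀ (h.ge (hdiff_mem g₀ w₀)).2
    refine hS_nontriv fun g s hs => sub_eq_zero.mp ?_
    rw [← Submodule.mem_bot F, ← hAK]
    exact ⟨hdiff_mem g s, hSK g s hs⟩
  · have hKW₁ : K ≤ W₁ := by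
      rcases hchain K hK with rfl | rfl | rfl | rfl
      · exact bot_le
      · exact le_rfl
      · exact absurd (hW₂ g₀ w₀) hw₀
      · exact absurd Submodule.mem_top hw₀
    have hW₂S : W₂ ≤ S := by
      rcases hchain S hS with rfl | rfl | rfl | rfl
      · refine absurd (fun g v hv => ?_) hS_nontriv
        rw [(Submodule.mem_bot F).mp hv, map_zero]
      · exact absurd hW₁ hS_nontriv
      · exact le_rfl
      · exact le_top
    exact hnot fun g v hv => hKW₁ (hSK g v (hW₂S hv))

end StarCond

theorem statement_11
    [IsAlgClosed F]
    {G : Type} [Group G] [Finite G]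
    {U : Type} [AddCommGroup U] [Module F U] [FiniteDimensional F U]
    {V : Type} [AddCommGroup V] [Module F V] [FiniteDimensional F V]
    (ρU : Representation F G U) (ρV : Representation F G V)
    (hU : IsIrredRep ρU) (hV : IsIrredRep ρV)
    (P : Subgroup G)
    (hEndU : 2 ≤ finrank F (repCommutant (ρU.comp P.subtype)))
    (hEndV : 2 ≤ finrank F (repCommutant (ρV.comp P.subtype)))
    (hStar : StarCond (Representation.ofMulAction F G (G ⧸ P))) :
    ¬ IsIrredRep (ρU.tprod ρV) := by
  intro hirr
  have := Fintype.ofFinite (G ⧸ P)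
  obtain ⟨a, haP, haG⟩ := hU.exists_linHom_fixed_by_subgroup_not_fixed P hEndU
  obtain ⟨b, hbP, hbG⟩ := hV.exists_linHom_fixed_by_subgroup_not_fixed P hEndV
  obtain ⟨c, hc⟩ := exists_cosetLift_cosetTrace_eq_smul_id P haP hbP hirr
  have hscalar (x : U →ₗ[F] U) :
      cosetLift P (linHom ρV ρV) hbP (cosetTrace P ρU haP x) ∈ (linHom ρV ρV).invariants := by
    rw [hc]
    exact Submodule.smul_mem _ _ (mem_repCommutant_iff.mp fun _ => rfl)
  exact not_starCond_of_forall_sub_mem (Subrepresentation.isSubrep _)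
    (Subrepresentation.isSubrep _) (IntertwiningMap.sub_mem_ker_of_mem_range _ _ hscalar)
    (not_trivialOn_range_cosetTrace P haP haG) (exists_sub_not_mem_ker_cosetLift P hbP hbG) hStar
end
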